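/- Let A be the 2-dimensional complex associative algebra with basis {e₁, e₂} and nonzero products e₁·e₁ = e₁, e₂·e₁ = e₂. Then any r of the form a₂₁e₂⊗e₁ + a₂₂e₂⊗e₂ is a solution of the AYBE. -/
import Mathlib


open Finset in
def AYBE {n : ℕ} (mul : Fin n → Fin n → Fin n → ℂ) (r : Fin n → Fin n → ℂ) : Prop :=
  ∀ p q s : Fin n,
    (∑ i, ∑ k, r i q * r k s * mul i k p)
    + (∑ j, ∑ l, r p j * r q l * mul j l s)
    - (∑ i, ∑ l, r i s * r p l * mul i l q) = 0

/-- Structure constants of the 2-dimensional algebra with `e₁·e₁ = e₁`, `e₂·e₁ = e₂`. -/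
def mulA3 : Fin 2 → Fin 2 → Fin 2 → ℂ := fun i j k =>
  if (i = 0 ∧ j = 0 ∧ k = 0) ∨ (i = 1 ∧ j = 0 ∧ k = 1) then 1 else 0

/-- For the algebra `e₁·e₁ = e₁, e₂·e₁ = e₂`, any
`r = a₂₁ e₂⊗e₁ + a₂₂ e₂⊗e₂` is a solution of the AYBE. -/
theorem stmt_9 (a₂₁ a₂₂ : ℂ) :
    AYBE mulA3 (fun i j =>
      if i = 1 ∧ j = 0 then a₂₁ else if i = 1 ∧ j = 1 then a₂₂ else 0) := by
  intro p q s
  fin_cases p <;> fin_cases q <;> fin_cases s <;>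
    simp [Fin.sum_univ_two, mulA3]
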